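/- Let a ∈ (0,∞), let P be a finite subset of (0,a), and let S : ℝ → ℝ satisfy conditions (S1)–(S4): (S1) S(−x) = −S(x) and S(a+x) = −S(x) for x ∈ [0,∞); (S2) 0 < S(x) < x for x ∈ (0,a); (S3) S ∈ C([0,a]) ∩ C¹([0,a)) ∩ C²([0,a) \ P); (S4) S'(x)² − S''(x)·S(x) ≥ 1 for x ∈ [0,a) \ P. Define g(x) := x + S(x) − x²(1 + S'(x))/S(x) for x ∈ (0,a). Then g(b) > 0 for every b ∈ (0,a). -/

import Mathlib

/-!
Put `u = S(x)/x` and `w = S' + 1 - u - u²`, so that `g = -(x²/S) w`; we show `w < 0`.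
Condition (S4) at `0`, together with `0 < S(x) < x`, forces `S'(0) = 1`, hence `w → 0` as `x → 0⁺`.
Off `P`, (S4) bounds `w'` by a continuous function `ρ` which is negative wherever `0 ≤ w < 1`,
so at such a point `w` is strictly decreasing from the left. Since `w → 0` at `0⁺`, this rules
out a first point where `w` reaches a small positive level, and then also a zero of `w`.
-/

open Real Set Filter Topology

section Comparison

variable {w ρ : ℝ → ℝ} {P : Set ℝ}

theorem eventually_lt_nhdsLT_of_deriv_le {U : Set ℝ} {x : ℝ} (hU : IsOpen U) (hP : P.Finite)
    (hw : ContinuousOn w U) (hwρ : ∀ y ∈ U \ P, deriv w y ≤ ρ y) (hx : x ∈ U)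
    (hρx : ContinuousAt ρ x) (hρneg : ρ x < 0) :
    ∀ᶠ y in 𝓝[<] x, w x < w y := by
  have hnear : ∀ᶠ y in 𝓝 x, y ∈ U ∧ ρ y < 0 ∧ y ∉ P \ {x} :=
    (hU.eventually_mem hx).and <| (hρx.eventually_lt_const hρneg).and <|
      hP.sdiff.isClosed.compl_mem_nhds fun h => h.2 rfl
  obtain ⟨l, hlx, hl⟩ := mem_nhdsLT_iff_exists_Ioo_subset.1 (nhdsWithin_le_nhds hnear)
  have hanti : StrictAntiOn w (Ioc l x) := by
    refine strictAntiOn_of_deriv_neg (convex_Ioc l x) (hw.mono fun y hy => ?_) fun y hy => ?_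
    · rcases hy.2.eq_or_lt with rfl | hyx
      · exact hx
      · exact (hl ⟨hy.1, hyx⟩).1
    · rw [interior_Ioc] at hy
      obtain ⟨hyU, hρy, hyP⟩ := hl hy
      exact (hwρ y ⟨hyU, fun h => hyP ⟨h, hy.2.ne⟩⟩).trans_lt hρy
  filter_upwards [Ioo_mem_nhdsLT hlx] with y hy
  exact hanti ⟨hy.1, hy.2.le⟩ ⟨hlx, le_rfl⟩ hy.2

theorem exists_first_eq_of_lt_of_le {f : ℝ → ℝ} {p q c : ℝ} (hpq : p ≤ q)
    (hf : ContinuousOn f (Icc p q)) (hp : f p < c) (hq : c ≤ f q) :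
    ∃ t ∈ Ioc p q, f t = c ∧ ∀ y ∈ Ico p t, f y < c := by
  set A := Icc p q ∩ f ⁻¹' Ici c
  have hAbdd : BddBelow A := ⟨p, fun y hy => hy.1.1⟩
  have htA : sInf A ∈ A :=
    (hf.preimage_isClosed_of_isClosed isClosed_Icc isClosed_Ici).csInf_mem
      ⟨q, ⟨hpq, le_rfl⟩, hq⟩ hAbdd
  set t := sInf A
  obtain ⟨s, hs, hfs⟩ :=
    intermediate_value_Icc htA.1.1 (hf.mono (Icc_subset_Icc_right htA.1.2)) ⟨hp.le, htA.2⟩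
  have hst : s = t := le_antisymm hs.2 (csInf_le hAbdd ⟨⟨hs.1, hs.2.trans htA.1.2⟩, hfs.ge⟩)
  have hpt : p < t := htA.1.1.lt_of_ne fun hpt => hp.not_ge (hpt ▸ htA.2)
  refine ⟨t, ⟨hpt, htA.1.2⟩, hst ▸ hfs, fun y hy => not_le.1 fun hcy => ?_⟩
  exact (csInf_le hAbdd ⟨⟨hy.1, hy.2.le.trans htA.1.2⟩, hcy⟩).not_gt hy.2

variable {c d ε : ℝ}

theorem nonpos_of_deriv_le_of_tendsto (hP : P.Finite) (hε : 0 < ε)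
    (hw : ContinuousOn w (Ioo c d)) (hρ : ContinuousOn ρ (Ioo c d))
    (hwρ : ∀ y ∈ Ioo c d \ P, deriv w y ≤ ρ y) (hρneg : ∀ y ∈ Ioo c d, w y ∈ Ico 0 ε → ρ y < 0)
    (hwc : Tendsto w (𝓝[>] c) (𝓝 0)) :
    ∀ x ∈ Ioo c d, w x ≤ 0 := by
  intro x₀ hx₀
  by_contra! hpos
  set k := min (w x₀) (ε / 2)
  have hk : 0 < k := lt_min hpos (half_pos hε)
  obtain ⟨x₁, hx₁k, hx₁⟩ : ∃ x₁, w x₁ < k ∧ x₁ ∈ Ioo c x₀ :=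
    ((hwc.eventually_lt_const hk).and (Ioo_mem_nhdsGT hx₀.1)).exists
  have hsub : Icc x₁ x₀ ⊆ Ioo c d := Icc_subset_Ioo hx₁.1 hx₀.2
  obtain ⟨t, ht, hwt, hbefore⟩ :=
    exists_first_eq_of_lt_of_le hx₁.2.le (hw.mono hsub) hx₁k (min_le_left _ _)
  have htU : t ∈ Ioo c d := hsub (Ioc_subset_Icc_self ht)
  have hρt : ρ t < 0 :=
    hρneg t htU ⟨hwt ▸ hk.le, hwt ▸ (min_le_right _ _).trans_lt (half_lt_self hε)⟩
  obtain ⟨y, hty, hy⟩ := ((eventually_lt_nhdsLT_of_deriv_le isOpen_Ioo hP hw hwρ htU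
    (hρ.continuousAt (isOpen_Ioo.mem_nhds htU)) hρt).and (Ioo_mem_nhdsLT ht.1)).exists
  exact (hbefore y ⟨hy.1.le, hy.2⟩).not_gt (hwt ▸ hty)

theorem neg_of_deriv_le_of_tendsto (hP : P.Finite) (hε : 0 < ε)
    (hw : ContinuousOn w (Ioo c d)) (hρ : ContinuousOn ρ (Ioo c d))
    (hwρ : ∀ y ∈ Ioo c d \ P, deriv w y ≤ ρ y) (hρneg : ∀ y ∈ Ioo c d, w y ∈ Ico 0 ε → ρ y < 0)
    (hwc : Tendsto w (𝓝[>] c) (𝓝 0)) :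
    ∀ x ∈ Ioo c d, w x < 0 := by
  have hle := nonpos_of_deriv_le_of_tendsto hP hε hw hρ hwρ hρneg hwc
  intro x hx
  refine (hle x hx).lt_of_ne fun hwx => ?_
  have hρx : ρ x < 0 := hρneg x hx ⟨hwx.ge, hwx ▸ hε⟩
  obtain ⟨y, hxy, hy⟩ := ((eventually_lt_nhdsLT_of_deriv_le isOpen_Ioo hP hw hwρ hx
    (hρ.continuousAt (isOpen_Ioo.mem_nhds hx)) hρx).and (Ioo_mem_nhdsLT hx.1)).exists
  exact (hle y ⟨hy.1, hy.2.trans hx.2⟩).not_gt (hwx ▸ hxy)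

end Comparison

section ScaledG

variable {S : ℝ → ℝ} {x : ℝ}

theorem apply_zero_eq_zero_of_pos_of_lt_self (hS : ContinuousWithinAt S (Ioi 0) 0)
    (hbd : ∀ᶠ x in 𝓝[>] 0, 0 < S x ∧ S x < x) : S 0 = 0 :=
  tendsto_nhds_unique hS <| tendsto_of_tendsto_of_tendsto_of_le_of_le' tendsto_const_nhds
    (tendsto_id.mono_left nhdsWithin_le_nhds) (hbd.mono fun _ h => h.1.le)
    (hbd.mono fun _ h => h.2.le)

theorem HasDerivAt.tendsto_div_self {s : ℝ} (hS : HasDerivAt S s 0) (h0 : S 0 = 0) :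
    Tendsto (fun x => S x / x) (𝓝[>] 0) (𝓝 s) := by
  refine ((hasDerivAt_iff_tendsto_slope.1 hS).mono_left
    (nhdsWithin_mono 0 fun y hy => ne_of_gt hy)).congr fun y => ?_
  simp [slope_def_field, h0]

theorem hasDerivAt_one_zero_of_pos_of_lt_self (h0 : S 0 = 0)
    (hbd : ∀ᶠ x in 𝓝[>] 0, 0 < S x ∧ S x < x) (hS4 : 1 ≤ deriv S 0 ^ 2) : HasDerivAt S 1 0 := by
  have hd : DifferentiableAt ℝ S 0 := differentiableAt_of_deriv_ne_zero fun h => by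
    rw [h] at hS4; norm_num at hS4
  have hlim := hd.hasDerivAt.tendsto_div_self h0
  have hle : deriv S 0 ≤ 1 := le_of_tendsto hlim <| (hbd.and self_mem_nhdsWithin).mono
    fun x hx => (div_le_one hx.2).2 hx.1.2.le
  have hge : 0 ≤ deriv S 0 := ge_of_tendsto hlim <| (hbd.and self_mem_nhdsWithin).mono
    fun x hx => (div_pos hx.1.1 hx.2).le
  have h1 : deriv S 0 = 1 := by nlinarith
  exact h1 ▸ hd.hasDerivAt

theorem ContDiffOn.continuousOn_deriv_Ico {c d : ℝ} (hS : ContDiffOn ℝ 1 S (Ico c d))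
    (hc : DifferentiableAt ℝ S c) : ContinuousOn (deriv S) (Ico c d) := by
  refine (hS.continuousOn_derivWithin (uniqueDiffOn_Ico c d) le_rfl).congr fun y hy => ?_
  rcases hy.1.eq_or_lt with rfl | hcy
  · exact (hc.derivWithin (uniqueDiffOn_Ico _ d _ hy)).symm
  · exact (derivWithin_of_mem_nhds (Ico_mem_nhds hcy hy.2)).symm

noncomputable def scaledG (S : ℝ → ℝ) (x : ℝ) : ℝ :=
  deriv S x + 1 - S x / x - (S x / x) ^ 2

-- (S4) bounds the derivative of `scaledG S` by this; unlike that derivative, it is continuous.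
noncomputable def scaledGMajorant (S : ℝ → ℝ) (x : ℝ) : ℝ :=
  (deriv S x ^ 2 - 1 - (deriv S x - S x / x) * (1 + 2 * (S x / x)) * (S x / x)) / S x

theorem g_eq_neg_mul_scaledG (hx : x ≠ 0) (hS : S x ≠ 0) :
    x + S x - x ^ 2 * (1 + deriv S x) / S x = -(x ^ 2 / S x) * scaledG S x := by
  unfold scaledG
  field_simp
  ring

theorem tendsto_scaledG_zero (hS : HasDerivAt S 1 0) (h0 : S 0 = 0)
    (hS' : ContinuousWithinAt (deriv S) (Ioi 0) 0) : Tendsto (scaledG S) (𝓝[>] 0) (𝓝 0) := by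
  have hu := hS.tendsto_div_self h0
  have hd : Tendsto (deriv S) (𝓝[>] 0) (𝓝 1) := hS.deriv ▸ hS'
  unfold scaledG
  simpa using ((hd.add_const 1).sub hu).sub (hu.pow 2)

theorem ContinuousOn.scaledG {U : Set ℝ} (hS : ContinuousOn S U) (hS' : ContinuousOn (deriv S) U)
    (hU : ∀ y ∈ U, y ≠ 0) : ContinuousOn (scaledG S) U :=
  have hu := hS.div continuousOn_id hU
  ((hS'.add continuousOn_const).sub hu).sub (hu.pow 2)

theorem ContinuousOn.scaledGMajorant {U : Set ℝ} (hS : ContinuousOn S U)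
    (hS' : ContinuousOn (deriv S) U) (hU : ∀ y ∈ U, y ≠ 0) (hSU : ∀ y ∈ U, S y ≠ 0) :
    ContinuousOn (scaledGMajorant S) U :=
  have hu := hS.div continuousOn_id hU
  (((hS'.pow 2).sub continuousOn_const).sub
    (((hS'.sub hu).mul (continuousOn_const.add (continuousOn_const.mul hu))).mul hu)).div hS hSU

theorem hasDerivAt_scaledG (hx : x ≠ 0) (hS : DifferentiableAt ℝ S x)
    (hS' : DifferentiableAt ℝ (deriv S) x) :
    HasDerivAt (scaledG S)
      (deriv (deriv S) x - (deriv S x - S x / x) * (1 + 2 * (S x / x)) / x) x := by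
  have hu : HasDerivAt (fun y => S y / y) ((deriv S x - S x / x) / x) x := by
    refine (hS.hasDerivAt.div (hasDerivAt_id' x) hx).congr_deriv ?_
    field_simp
  refine (((hS'.hasDerivAt.add_const 1).sub hu).sub (hu.pow 2)).congr_deriv ?_
  push_cast
  ring

theorem deriv_scaledG_le_scaledGMajorant (hx : x ≠ 0) (hSx : 0 < S x)
    (hS : DifferentiableAt ℝ S x) (hS' : DifferentiableAt ℝ (deriv S) x)
    (hS4 : 1 ≤ deriv S x ^ 2 - deriv (deriv S) x * S x) :
    deriv (scaledG S) x ≤ scaledGMajorant S x := by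
  rw [(hasDerivAt_scaledG hx hS hS').deriv]
  have hgap : scaledGMajorant S x -
      (deriv (deriv S) x - (deriv S x - S x / x) * (1 + 2 * (S x / x)) / x) =
      (deriv S x ^ 2 - deriv (deriv S) x * S x - 1) / S x := by
    unfold scaledGMajorant
    field_simp
    ring
  linarith [div_nonneg (sub_nonneg.2 hS4) hSx.le]

theorem scaledGMajorant_neg (hx : 0 < x) (hSx : 0 < S x) (hSxx : S x < x)
    (hw : scaledG S x ∈ Ico 0 1) : scaledGMajorant S x < 0 := by
  set u := S x / x
  set s := deriv S x
  have hu0 : 0 < u := div_pos hSx hx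
  have hu1 : u < 1 := (div_lt_one hx).2 hSxx
  obtain ⟨hw0, hw1⟩ : 0 ≤ s + 1 - u - u ^ 2 ∧ s + 1 - u - u ^ 2 < 1 := hw
  -- In `s` the numerator is a convex quadratic, negative at both ends of `u + u² - 1 ≤ s < u + u²`.
  have hnum : s ^ 2 - 1 - (s - u) * (1 + 2 * u) * u < 0 := by
    nlinarith [mul_pos hu0 (mul_pos (by nlinarith : (0:ℝ) < 1 - u ^ 2) (sub_pos.2 hu1)),
      mul_nonneg hw0 (by nlinarith : (0:ℝ) ≤ 1 + u ^ 2 - s)]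
  exact div_neg_of_neg_of_pos hnum hSx

theorem scaledG_neg {a : ℝ} {P : Set ℝ} (ha : 0 < a) (hP : P.Finite)
    (hS2 : ∀ x ∈ Ioo 0 a, 0 < S x ∧ S x < x) (h0 : S 0 = 0) (hD0 : HasDerivAt S 1 0)
    (hC1 : ContDiffOn ℝ 1 S (Ico 0 a)) (hC2 : ContDiffOn ℝ 2 S (Ioo 0 a \ P))
    (hS4 : ∀ x ∈ Ioo 0 a \ P, 1 ≤ deriv S x ^ 2 - deriv (deriv S) x * S x) :
    ∀ x ∈ Ioo 0 a, scaledG S x < 0 := by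
  have hne : ∀ x ∈ Ioo 0 a, x ≠ 0 := fun x hx => hx.1.ne'
  have hSne : ∀ x ∈ Ioo 0 a, S x ≠ 0 := fun x hx => (hS2 x hx).1.ne'
  have hD : ContinuousOn (deriv S) (Ico 0 a) := hC1.continuousOn_deriv_Ico hD0.differentiableAt
  have hS : ContinuousOn S (Ioo 0 a) := hC1.continuousOn.mono Ioo_subset_Ico_self
  have hD' : ContinuousOn (deriv S) (Ioo 0 a) := hD.mono Ioo_subset_Ico_self
  have hdiff : ∀ x ∈ Ioo 0 a, DifferentiableAt ℝ S x := fun x hx =>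
    (hC1.differentiableOn one_ne_zero).differentiableAt (Ico_mem_nhds hx.1 hx.2)
  have hU : IsOpen (Ioo 0 a \ P) := isOpen_Ioo.sdiff hP.isClosed
  have hdiff' : ∀ x ∈ Ioo 0 a \ P, DifferentiableAt ℝ (deriv S) x := fun x hx =>
    ((hC2.deriv_of_isOpen hU (m := 1) le_rfl).differentiableOn one_ne_zero).differentiableAt
      (hU.mem_nhds hx)
  refine neg_of_deriv_le_of_tendsto hP one_pos (hS.scaledG hD' hne)
    (hS.scaledGMajorant hD' hne hSne) (fun x hx => ?_) (fun x hx hw => ?_) ?_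
  · exact deriv_scaledG_le_scaledGMajorant (hne x hx.1) (hS2 x hx.1).1 (hdiff x hx.1)
      (hdiff' x hx) (hS4 x hx)
  · exact scaledGMajorant_neg hx.1 (hS2 x hx).1 (hS2 x hx).2 hw
  · exact tendsto_scaledG_zero hD0 h0
      ((hD 0 (left_mem_Ico.2 ha)).mono_of_mem_nhdsWithin (Ico_mem_nhdsGT ha))

end ScaledG

theorem g_pos (a : ℝ) (P : Set ℝ) (hPfin : P.Finite)
    (hPsub : P ⊆ Ioo 0 a) (S : ℝ → ℝ)
    (hS2 : ∀ x ∈ Ioo 0 a, 0 < S x ∧ S x < x)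
    (hS3 : ContinuousOn S (Icc 0 a) ∧ ContDiffOn ℝ 1 S (Ico 0 a) ∧
      ContDiffOn ℝ 2 S (Ico 0 a \ P))
    (hS4 : ∀ x ∈ Ico 0 a \ P, (deriv S x) ^ 2 - deriv (deriv S) x * S x ≥ 1) :
    ∀ b ∈ Ioo 0 a, 0 < b + S b - b ^ 2 * (1 + deriv S b) / S b := by
  obtain ⟨hC0, hC1, hC2⟩ := hS3
  intro b hb
  have ha : 0 < a := hb.1.trans hb.2
  have hbd : ∀ᶠ x in 𝓝[>] 0, 0 < S x ∧ S x < x := eventually_of_mem (Ioo_mem_nhdsGT ha) hS2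
  have h0 : S 0 = 0 := apply_zero_eq_zero_of_pos_of_lt_self
    ((hC0 0 (left_mem_Icc.2 ha.le)).mono_of_mem_nhdsWithin (Icc_mem_nhdsGT ha)) hbd
  have hD0 : HasDerivAt S 1 0 := hasDerivAt_one_zero_of_pos_of_lt_self h0 hbd <| by
    simpa [h0] using hS4 0 ⟨left_mem_Ico.2 ha, fun h => (hPsub h).1.false⟩
  have hw : scaledG S b < 0 := scaledG_neg ha hPfin hS2 h0 hD0 hC1
    (hC2.mono (sdiff_subset_sdiff_left Ioo_subset_Ico_self))
    (fun x hx => hS4 x ⟨Ioo_subset_Ico_self hx.1, hx.2⟩) b hb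
  have hSb : 0 < S b := (hS2 b hb).1
  rw [g_eq_neg_mul_scaledG hb.1.ne' hSb.ne']
  exact mul_pos_of_neg_of_neg (neg_neg_of_pos (div_pos (pow_pos hb.1 2) hSb)) hw
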